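/- Define f : ℝ → ℝ by f(x) = |x|^{1/4} if |x| ≤ 1 and f(x) = 1 if |x| > 1, and let W : ℝ → ℝ be the 1-periodic function with W(y) = 1/2 − |y| for y ∈ [−1/2, 1/2]. Then for every ε ∈ (0, 2^{−80}) and every z ∈ ℝ, one has f(εz) + W(z) ≥ (1/32) ε^{1/4}. -/

import Mathlib

open Real Set

noncomputable section

/-- `f(x) = |x|^{1/4}` for `|x| ≤ 1`, and `f(x) = 1` for `|x| > 1`. -/
def f (x : ℝ) : ℝ := if |x| ≤ 1 then |x| ^ ((1:ℝ)/4) else 1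

/-- The 1-periodic extension of `y ↦ 1/2 − |y|` from `[−1/2, 1/2]`; equivalently
`W(y) = 1/2 − dist(y, ℤ)`. -/
def W (y : ℝ) : ℝ := 1/2 - |y - round y|

/-! Proof idea: near the origin, `|z| ≤ 1/4`, the potential `W z` is at least `1/4`; away from
it `|ε z| ≥ ε/4`, and `f` is at least `min 1 ((ε/4)^{1/4}) ≥ ε^{1/4}/2`. Both terms are
nonnegative, so one of them always carries the bound. -/

lemma W_nonneg (y : ℝ) : 0 ≤ W y := by
  have := abs_sub_round y
  unfold W
  linarith

lemma half_sub_abs_le_W (y : ℝ) : 1/2 - |y| ≤ W y := by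
  have := round_le y 0
  rw [Int.cast_zero, sub_zero] at this
  unfold W
  linarith

lemma f_eq_min (x : ℝ) : f x = min 1 (|x| ^ ((1:ℝ)/4)) := by
  unfold f
  split_ifs with hx
  · exact (min_eq_right (rpow_le_one (abs_nonneg x) hx (by norm_num))).symm
  · exact (min_eq_left (one_le_rpow (not_le.mp hx).le (by norm_num))).symm

lemma f_nonneg (x : ℝ) : 0 ≤ f x := by
  rw [f_eq_min]
  exact le_min zero_le_one (rpow_nonneg (abs_nonneg x) _)

lemma f_mono_abs {x y : ℝ} (h : |x| ≤ |y|) : f x ≤ f y := by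
  rw [f_eq_min, f_eq_min]
  exact min_le_min_left 1 (rpow_le_rpow (abs_nonneg x) h (by norm_num))

lemma rpow_quarter_div_two_le {ε : ℝ} (hε : 0 ≤ ε) :
    ε ^ ((1:ℝ)/4) / 2 ≤ (ε / 4) ^ ((1:ℝ)/4) := by
  have h16 : (16 : ℝ) ^ ((1:ℝ)/4) = 2 := by
    rw [show (16 : ℝ) = 2 ^ (4 : ℕ) by norm_num, one_div]
    exact pow_rpow_inv_natCast zero_le_two (by norm_num)
  calc ε ^ ((1:ℝ)/4) / 2 = (ε / 16) ^ ((1:ℝ)/4) := by rw [div_rpow hε (by norm_num), h16]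
    _ ≤ (ε / 4) ^ ((1:ℝ)/4) := rpow_le_rpow (by positivity) (by linarith) (by norm_num)

lemma f_mul_add_W_ge {ε : ℝ} (hε0 : 0 < ε) (hε1 : ε ≤ 1) (z : ℝ) :
    (1/32 : ℝ) * ε ^ ((1:ℝ)/4) ≤ f (ε * z) + W z := by
  have hε4 : ε ^ ((1:ℝ)/4) ≤ 1 := rpow_le_one hε0.le hε1 (by norm_num)
  have hε4_nonneg : 0 ≤ ε ^ ((1:ℝ)/4) := rpow_nonneg hε0.le _
  rcases le_or_gt |z| (1/4) with hz | hz
  · have := half_sub_abs_le_W z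
    linarith [f_nonneg (ε * z)]
  · have h_far : |ε / 4| ≤ |ε * z| := by
      rw [abs_mul, abs_of_pos hε0, abs_of_pos (by positivity)]
      nlinarith
    have hf : min 1 (ε ^ ((1:ℝ)/4) / 2) ≤ f (ε * z) := by
      refine le_trans ?_ (f_mono_abs h_far)
      rw [f_eq_min, abs_of_pos (by positivity)]
      exact min_le_min_left 1 (rpow_quarter_div_two_le hε0.le)
    have : (1/32 : ℝ) * ε ^ ((1:ℝ)/4) ≤ min 1 (ε ^ ((1:ℝ)/4) / 2) :=
      le_min (by linarith) (by linarith)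
    linarith [W_nonneg z]

/-- Pointwise potential estimate underlying Proposition 4.2:
`f(εz) + W(z) ≥ (1/32) ε^{1/4}` for all `z` and all `ε ∈ (0, 2^{−80})`. -/
theorem stmt_8 :
    ∀ ε : ℝ, 0 < ε → ε < (2:ℝ) ^ (-80 : ℤ) →
      ∀ z : ℝ, (1/32 : ℝ) * ε ^ ((1:ℝ)/4) ≤ f (ε * z) + W z := by
  intro ε hε0 hε z
  exact f_mul_add_W_ge hε0 (hε.le.trans (by norm_num)) z
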